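/- arXiv:1901.10054 — 4 statements merged into one kernel-verified Lean document; each statement's English description precedes it below -/
import Mathlib

section
/- The cardinality of the family of p-filters on ℕ is exactly 2^(2^ℵ₀). -/
/-- `H` is an order-convex subset of `N`: it is contained in `N` and contains every
natural number lying strictly between two of its elements. -/
def OrdConnIn (N H : Set ℕ) : Prop :=
  H ⊆ N ∧ ∀ i ∈ H, ∀ j ∈ H, ∀ k : ℕ, i < k → k < j → k ∈ H

/-- `H` is a pile of `N`: a maximal order-convex subset of `N`. -/
def IsPile (N H : Set ℕ) : Prop :=
  OrdConnIn N H ∧ ∀ H' : Set ℕ, OrdConnIn N H' → H ⊆ H' → H' = H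

/-- `Z` is admissible for `N`: there is a uniform bound `k` such that every pile of `N`
meets `Z` in a finite set of cardinality at most `k`. -/
def Admissible (N Z : Set ℕ) : Prop :=
  ∃ k : ℕ, ∀ H : Set ℕ, IsPile N H → (H ∩ Z).Finite ∧ (H ∩ Z).ncard ≤ k

/-- A filter `σ` on `ℕ` is a p-filter if whenever `N ∈ σ` and `Z` is admissible for `N`,
also `N \ Z ∈ σ`. -/
def IsPFilter (σ : Filter ℕ) : Prop :=
  ∀ N ∈ σ, ∀ Z : Set ℕ, Admissible N Z → N \ Z ∈ σ

/-!
Cut `ℕ` into the intervals `block n = [n², (n + 1)²)`. For any filter `F` on `ℕ`, the sets `N` that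
`F`-eventually miss at most `m` points of `block n` (for a fixed `m`) form a p-filter: such an `N`
meets the block in at most `m + 1` runs, each inside a pile, so a `Z` admissible with bound `k`
removes at most `(m + 1) k` further points. Take for `F` the filter generated by a pattern of
Hausdorff's independent family `(A X)_{X ⊆ ℕ}`, i.e. by the `A X` with `X ∈ S` and the complements
of the others. Since blocks grow and every Boolean combination of the `A X` is infinite,
`⋃ n ∈ A X, block n` lies in the resulting p-filter iff `X ∈ S`, giving `2 ^ 𝔠` distinct p-filters.
-/

open Set Filter Function

lemma OrdConnIn.ordConnected {N H : Set ℕ} (hH : OrdConnIn N H) : H.OrdConnected :=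
  ordConnected_of_Ioo fun i hi j hj _ k hk => hH.2 i hi j hj k hk.1 hk.2

lemma isPile_ordConnectedComponent {N : Set ℕ} {a : ℕ} (ha : a ∈ N) :
    IsPile N (ordConnectedComponent N a) := by
  refine ⟨⟨ordConnectedComponent_subset, fun i hi j hj k hik hkj =>
    OrdConnected.out inferInstance hi hj ⟨hik.le, hkj.le⟩⟩, fun H hH hsub => ?_⟩
  have : a ∈ H := hsub (self_mem_ordConnectedComponent.mpr ha)
  exact (subset_ordConnectedComponent (h := hH.ordConnected) this hH.1).antisymm hsub

lemma ncard_inter_le_of_ordConnected {N Z J : Set ℕ} {k : ℕ}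
    (hk : ∀ H, IsPile N H → (H ∩ Z).Finite ∧ (H ∩ Z).ncard ≤ k)
    (hJN : J ⊆ N) (hJ : J.OrdConnected) : (J ∩ Z).ncard ≤ k := by
  obtain rfl | ⟨a, ha⟩ := J.eq_empty_or_nonempty
  · simp
  have hH := hk _ (isPile_ordConnectedComponent (hJN ha))
  exact (ncard_le_ncard (inter_subset_inter_left Z
    (subset_ordConnectedComponent (h := hJ) ha hJN)) hH.1).trans hH.2

noncomputable def gapCount (N : Set ℕ) (x : ℕ) : ℕ := (Iio x \ N).ncard

lemma gapCount_mono (N : Set ℕ) : Monotone (gapCount N) := fun _ _ hxy =>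
  ncard_le_ncard (sdiff_subset_sdiff_left (Iio_subset_Iio hxy)) ((finite_Iio _).sdiff)

lemma gapCount_lt {N : Set ℕ} {x y : ℕ} (hx : x ∉ N) (hxy : x < y) :
    gapCount N x < gapCount N y := by
  refine ncard_lt_ncard ⟨sdiff_subset_sdiff_left (Iio_subset_Iio hxy.le), fun h => ?_⟩
    ((finite_Iio _).sdiff)
  exact (lt_irrefl x) (h ⟨hxy, hx⟩).1

lemma gapCount_le_add {N : Set ℕ} {a b x : ℕ} (hx : x ∈ Ico a b) :
    gapCount N x ≤ gapCount N a + (Ico a b \ N).ncard := by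
  refine (ncard_le_ncard (t := (Iio a \ N) ∪ (Ico a b \ N)) ?_ ((finite_Iio _).sdiff.union
    (finite_Ico _ _).sdiff)).trans (ncard_union_le _ _)
  rintro y ⟨hy, hyN⟩
  rcases lt_or_ge y a with hya | hya
  · exact Or.inl ⟨hya, hyN⟩
  · exact Or.inr ⟨⟨hya, (mem_Iio.mp hy).trans hx.2⟩, hyN⟩

def gapRun (N : Set ℕ) (c : ℕ) : Set ℕ := {x ∈ N | gapCount N x = c}

lemma ordConnected_gapRun (N : Set ℕ) (c : ℕ) : (gapRun N c).OrdConnected := by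
  refine ordConnected_of_Ioo fun x ⟨_, hx⟩ z ⟨_, hz⟩ _ y ⟨hxy, hyz⟩ => ?_
  have h₁ := gapCount_mono N hxy.le
  have h₂ := gapCount_mono N hyz.le
  refine ⟨not_not.mp fun hyN => ?_, by omega⟩
  have := gapCount_lt hyN hyz
  omega

lemma ncard_Ico_inter_inter_le {N Z : Set ℕ} {k : ℕ}
    (hk : ∀ H, IsPile N H → (H ∩ Z).Finite ∧ (H ∩ Z).ncard ≤ k) (a b : ℕ) :
    (Ico a b ∩ N ∩ Z).ncard ≤ ((Ico a b \ N).ncard + 1) * k := by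
  set g := (Ico a b \ N).ncard
  set J : ℕ → Set ℕ := fun c => Ico a b ∩ gapRun N (gapCount N a + c)
  -- the `g` gaps cut `Ico a b ∩ N` into at most `g + 1` runs, each inside a pile
  have hcover : Ico a b ∩ N ∩ Z ⊆ ⋃ c ∈ Finset.range (g + 1), J c ∩ Z := by
    rintro x ⟨⟨hx, hxN⟩, hxZ⟩
    have := gapCount_mono N hx.1
    have := gapCount_le_add (N := N) hx
    exact mem_biUnion (x := gapCount N x - gapCount N a) (by simp; omega)
      ⟨⟨hx, hxN, by omega⟩, hxZ⟩
  calc (Ico a b ∩ N ∩ Z).ncard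
      ≤ (⋃ c ∈ Finset.range (g + 1), J c ∩ Z).ncard :=
        ncard_le_ncard hcover ((Finset.finite_toSet _).biUnion fun c _ =>
          (finite_Ico a b).subset fun x hx => hx.1.1)
    _ ≤ ∑ c ∈ Finset.range (g + 1), (J c ∩ Z).ncard := Finset.set_ncard_biUnion_le _ _
    _ ≤ (g + 1) * k := (Finset.sum_le_card_nsmul _ _ k fun c _ =>
          ncard_inter_le_of_ordConnected hk (fun x hx => hx.2.1)
            (ordConnected_Ico.inter (ordConnected_gapRun N _))).trans (by simp)

def block (n : ℕ) : Set ℕ := Ico (n ^ 2) ((n + 1) ^ 2)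

lemma pairwise_disjoint_block : Pairwise (Disjoint on block) :=
  (pow_left_mono 2).pairwise_disjoint_on_Ico_succ

lemma ncard_block (n : ℕ) : (block n).ncard = 2 * n + 1 := by
  rw [block, ncard_Ico_nat]
  ring_nf
  omega

def blockFilter (F : Filter ℕ) : Filter ℕ where
  sets := {N | ∃ m, ∀ᶠ n in F, (block n \ N).ncard ≤ m}
  univ_sets := ⟨0, by simp⟩
  sets_of_superset := by
    rintro N N' ⟨m, hm⟩ hNN'
    exact ⟨m, hm.mono fun n hn => (ncard_le_ncard (sdiff_subset_sdiff_right hNN')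
      ((finite_Ico _ _).sdiff)).trans hn⟩
  inter_sets := by
    rintro N N' ⟨m, hm⟩ ⟨m', hm'⟩
    refine ⟨m + m', (hm.and hm').mono fun n hn => ?_⟩
    rw [sdiff_inter]
    exact (ncard_union_le _ _).trans (add_le_add hn.1 hn.2)

lemma isPFilter_blockFilter (F : Filter ℕ) : IsPFilter (blockFilter F) := by
  rintro N ⟨m, hm⟩ Z ⟨k, hk⟩
  refine ⟨m + (m + 1) * k, hm.mono fun n hn => ?_⟩
  have hsplit : block n \ (N \ Z) ⊆ (block n \ N) ∪ (block n ∩ N ∩ Z) := by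
    rintro x ⟨hx, hxNZ⟩
    by_cases hxN : x ∈ N
    · exact Or.inr ⟨⟨hx, hxN⟩, not_not.mp fun hxZ => hxNZ ⟨hxN, hxZ⟩⟩
    · exact Or.inl ⟨hx, hxN⟩
  calc (block n \ (N \ Z)).ncard ≤ (block n \ N).ncard + (block n ∩ N ∩ Z).ncard :=
        (ncard_le_ncard hsplit ((finite_Ico _ _).subset (union_subset sdiff_subset
          fun x hx => hx.1.1))).trans (ncard_union_le _ _)
    _ ≤ m + (m + 1) * k := add_le_add hn ((ncard_Ico_inter_inter_le hk _ _).trans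
          (Nat.mul_le_mul_right k (Nat.succ_le_succ hn)))

lemma biUnion_block_mem_blockFilter {F : Filter ℕ} {A : Set ℕ} (hA : A ∈ F) :
    ⋃ n ∈ A, block n ∈ blockFilter F :=
  ⟨0, mem_of_superset hA fun n hn => by
    simp [sdiff_eq_empty.mpr (subset_biUnion_of_mem (u := block) hn)]⟩

lemma exists_union_Iio_mem_of_biUnion_block_mem {F : Filter ℕ} {A : Set ℕ}
    (h : ⋃ n ∈ A, block n ∈ blockFilter F) : ∃ m, A ∪ Iio m ∈ F := by
  obtain ⟨m, hm⟩ := h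
  refine ⟨m, mem_of_superset hm fun n hn => or_iff_not_imp_left.mpr fun hnA => ?_⟩
  have hdisj : block n \ ⋃ j ∈ A, block j = block n := by
    refine sdiff_eq_left.mpr (disjoint_iUnion₂_right.mpr fun j hj =>
      pairwise_disjoint_block fun hnj => hnA (hnj ▸ hj))
  have : (block n \ ⋃ j ∈ A, block j).ncard ≤ m := hn
  rw [hdisj, ncard_block] at this
  exact mem_Iio.mpr (by omega)

/-- The sets below are the finite Boolean combinations of the `A i`, with `S` choosing the members
taken positively. -/
def IsIndependent {ι α : Type*} (A : ι → Set α) : Prop :=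
  ∀ t : Set ι, t.Finite → ∀ S : Set ι, {x | ∀ i ∈ t, (x ∈ A i ↔ i ∈ S)}.Infinite

def patternFilter {ι α : Type*} (A : ι → Set α) (S : Set ι) : Filter α :=
  ⨅ i, 𝓟 {x | x ∈ A i ↔ i ∈ S}

namespace IsIndependent

variable {ι α : Type*} {A : ι → Set α}

lemma infinite_of_mem_patternFilter (hA : IsIndependent A) {S : Set ι} {s : Set α}
    (hs : s ∈ patternFilter A S) : s.Infinite := by
  obtain ⟨t, ht, hts⟩ := (hasBasis_iInf_principal_finite _).mem_iff.mp hs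
  exact (hA t ht S).mono fun x hx => hts (mem_iInter₂.mpr hx)

lemma mem_of_union_mem_patternFilter (hA : IsIndependent A) {S : Set ι} {i : ι} {s : Set α}
    (hs : s.Finite) (h : A i ∪ s ∈ patternFilter A S) : i ∈ S := by
  by_contra hi
  have hAi : {x | x ∈ A i ↔ i ∈ S} ∈ patternFilter A S := mem_iInf_of_mem i (mem_principal_self _)
  refine hA.infinite_of_mem_patternFilter (mem_of_superset (inter_mem h hAi) ?_) hs
  rintro x ⟨hx | hx, hxA⟩
  · exact absurd (hxA.mp hx) hi
  · exact hx

lemma biUnion_block_mem_blockFilter_iff {A : ι → Set ℕ} (hA : IsIndependent A) (S : Set ι)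
    (i : ι) : ⋃ n ∈ A i, block n ∈ blockFilter (patternFilter A S) ↔ i ∈ S := by
  refine ⟨fun h => ?_, fun hi => biUnion_block_mem_blockFilter
    (mem_iInf_of_mem i (mem_principal.mpr fun x hx => hx.mpr hi))⟩
  obtain ⟨m, hm⟩ := exists_union_Iio_mem_of_biUnion_block_mem h
  exact hA.mem_of_union_mem_patternFilter (finite_Iio m) hm

lemma injective_blockFilter_patternFilter {A : ι → Set ℕ} (hA : IsIndependent A) :
    Injective fun S => blockFilter (patternFilter A S) := fun S S' h => by
  ext i
  rw [← hA.biUnion_block_mem_blockFilter_iff S, ← hA.biUnion_block_mem_blockFilter_iff S']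
  exact Iff.of_eq (congrArg (_ ∈ ·) h)

lemma preimage {β : Type*} (hA : IsIndependent A) {f : β → α} (hf : Surjective f) :
    IsIndependent fun i => f ⁻¹' A i := fun t ht S =>
  (hA t ht S).preimage (hf.range_eq ▸ subset_univ _)

end IsIndependent

open Classical in
lemma eventually_injOn_trace {α : Type*} {t : Set (Set α)} (ht : t.Finite) :
    ∀ᶠ F : Finset α in atTop, InjOn (fun X => {x ∈ F | x ∈ X}) t := by
  have hsep : ∀ᶠ F : Finset α in atTop,
      ∀ p ∈ t ×ˢ t, p.1 ≠ p.2 → ∃ x ∈ F, ¬(x ∈ p.1 ↔ x ∈ p.2) := by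
    refine (ht.prod ht).eventually_all.mpr fun p _ => ?_
    by_cases h : p.1 = p.2
    · exact Eventually.of_forall fun _ h' => absurd h h'
    obtain ⟨x, hx⟩ := not_forall.mp (mt Set.ext h)
    exact (eventually_ge_atTop {x}).mono fun F hF _ => ⟨x, hF (Finset.mem_singleton_self x), hx⟩
  refine hsep.mono fun F hF X hX Y hY hXY => by_contra fun hne => ?_
  obtain ⟨x, hxF, hx⟩ := hF (X, Y) ⟨hX, hY⟩ hne
  exact hx (by simpa [hxF] using congrArg (x ∈ ·) hXY)

open Classical in
/-- Hausdorff's coding of an independent family: the pair `(F, 𝒜)` codes the sets whose trace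
on `F` lies in `𝒜`. -/
def hausdorffCode (X : Set ℕ) : Set (Finset ℕ × Finset (Finset ℕ)) :=
  {p | {x ∈ p.1 | x ∈ X} ∈ p.2}

open Classical in
lemma isIndependent_hausdorffCode : IsIndependent hausdorffCode := by
  intro t ht S
  obtain ⟨F₀, hF₀⟩ := eventually_atTop.mp (eventually_injOn_trace ht)
  let code (F : Finset ℕ) : Finset ℕ × Finset (Finset ℕ) :=
    (F, {X ∈ ht.toFinset | X ∈ S}.image fun X => {x ∈ F | x ∈ X})
  have hcode : code '' Ici F₀ ⊆ {p | ∀ X ∈ t, (p ∈ hausdorffCode X ↔ X ∈ S)} := by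
    rintro _ ⟨F, hF, rfl⟩ X hX
    simp only [hausdorffCode, code, mem_ofPred_eq, Finset.mem_image, Finset.mem_filter,
      ht.mem_toFinset]
    exact ⟨fun ⟨Y, ⟨hY, hYS⟩, hYX⟩ => hF₀ F hF hY hX hYX ▸ hYS, fun hXS => ⟨X, ⟨hX, hXS⟩, rfl⟩⟩
  refine ((infinite_of_forall_exists_gt fun G => ?_).image fun F _ F' _ h =>
    congrArg Prod.fst h).mono hcode
  obtain ⟨x, hx⟩ := Infinite.exists_notMem_finset (G ∪ F₀)
  exact ⟨insert x (G ∪ F₀), Finset.subset_union_right.trans (Finset.subset_insert _ _),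
    Finset.subset_union_left.trans_ssubset (Finset.ssubset_insert hx)⟩

def hausdorffFamily (X : Set ℕ) : Set ℕ :=
  Denumerable.ofNat (Finset ℕ × Finset (Finset ℕ)) ⁻¹' hausdorffCode X

lemma isIndependent_hausdorffFamily : IsIndependent hausdorffFamily :=
  isIndependent_hausdorffCode.preimage
    (Denumerable.eqv (Finset ℕ × Finset (Finset ℕ))).symm.surjective

/-- There are exactly `2 ^ (2 ^ ℵ₀)` p-filters on `ℕ`. -/
theorem card_pFilters :
    Cardinal.mk {σ : Filter ℕ // IsPFilter σ} = (2 : Cardinal) ^ ((2 : Cardinal) ^ Cardinal.aleph0) := by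
  have hcard : Cardinal.mk (Set (Set ℕ)) = (2 : Cardinal) ^ (2 : Cardinal) ^ Cardinal.aleph0 := by
    rw [Cardinal.mk_set, Cardinal.mk_set, Cardinal.mk_nat]
  refine le_antisymm ?_ ?_
  · calc Cardinal.mk {σ : Filter ℕ // IsPFilter σ} ≤ Cardinal.mk (Filter ℕ) :=
          Cardinal.mk_subtype_le _
      _ ≤ Cardinal.mk (Set (Set ℕ)) := Cardinal.mk_le_of_injective fun _ _ => Filter.filter_eq
      _ = _ := hcard
  · rw [← hcard]
    exact Cardinal.mk_le_of_injective (f := fun S => ⟨_, isPFilter_blockFilter _⟩)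
      fun S S' h => isIndependent_hausdorffFamily.injective_blockFilter_patternFilter
        (congrArg Subtype.val h)
end

section
/- Let {N_i : i ∈ ℕ} be a strictly decreasing chain of sets in an l-base B of a topological space X with ⋂_{i=1}^∞ N_i ∈ B. Let α = {X, ⋂_{i=1}^∞ N_i} ∪ {N_i : i ∈ ℕ} and U_α(x) = ⋂{M ∈ α : x ∈ M}. Then for every A ⊆ X, the set U_α(A) = ⋃_{a ∈ A} U_α(a) is a finite union of members of α, hence belongs to B. -/
/-- The transitive neighbornet associated with a cover `α`:
`UofCover α x = ⋂ {M ∈ α : x ∈ M}`. -/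
def UofCover {X : Type*} (α : Set (Set X)) (x : X) : Set X :=
  ⋂₀ {M | M ∈ α ∧ x ∈ M}

/-- `α` is an interior preserving open cover: an open cover all of whose
subfamilies have open intersection. -/
def IsIPOpenCover {X : Type*} [TopologicalSpace X] (α : Set (Set X)) : Prop :=
  (∀ M ∈ α, IsOpen M) ∧ ⋃₀ α = Set.univ ∧ ∀ β ⊆ α, IsOpen (⋂₀ β)

/-- An l-base: a base of the topology closed under finite unions and finite
intersections and containing `∅` and `X`. -/
def IsLBase {X : Type*} [TopologicalSpace X] (B : Set (Set X)) : Prop :=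
  TopologicalSpace.IsTopologicalBasis B ∧
  (∀ M ∈ B, ∀ N ∈ B, M ∪ N ∈ B) ∧
  (∀ M ∈ B, ∀ N ∈ B, M ∩ N ∈ B) ∧
  ∅ ∈ B ∧ (Set.univ : Set X) ∈ B

/-!
Put `α = {X, ⋂ i, N i} ∪ {N i : i ∈ ℕ}`. For any sequence `N`, `U_α(x)` is the intersection of
the `N i` containing `x`. When `N` is antitone these indices form a lower set of `ℕ`, i.e. all of
`ℕ` or some `{i | i < n}`, so `U_α(x)` is `⋂ i, N i`, `X` or `N (n - 1)`, a member of `α`.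
Moreover every nonempty subfamily of the chain `α` has a largest member, so `U_α(A)` is a single
member of `α` (or `∅`), hence lies in `B`.
-/

open Set

section

variable {X : Type*} {N : ℕ → Set X}

def chainCover (N : ℕ → Set X) : Set (Set X) :=
  insert univ (insert (⋂ i, N i) (range N))

lemma univ_mem_chainCover : univ ∈ chainCover N := mem_insert _ _

lemma iInter_mem_chainCover : ⋂ i, N i ∈ chainCover N := mem_insert_of_mem _ (mem_insert _ _)

lemma apply_mem_chainCover (i : ℕ) : N i ∈ chainCover N :=
  mem_insert_of_mem _ (mem_insert_of_mem _ (mem_range_self i))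

lemma chainCover_subset {B : Set (Set X)} (huniv : univ ∈ B) (hN : ∀ i, N i ∈ B)
    (hI : ⋂ i, N i ∈ B) : chainCover N ⊆ B := by
  rintro M (rfl | rfl | ⟨i, rfl⟩)
  exacts [huniv, hI, hN i]

lemma UofCover_chainCover (x : X) :
    UofCover (chainCover N) x = ⋂ i ∈ {i | x ∈ N i}, N i := by
  ext y
  simpa [UofCover, chainCover] using fun h hx i => h i (hx i)

lemma Antitone.biInter_mem_chainCover (hN : Antitone N) {I : Set ℕ} (hI : IsLowerSet I) :
    ⋂ i ∈ I, N i ∈ chainCover N := by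
  rcases hI.eq_univ_or_Iio with rfl | ⟨_ | m, rfl⟩
  · simpa using iInter_mem_chainCover
  · simpa using univ_mem_chainCover
  · have hIio : ⋂ i ∈ Iio (m + 1), N i = N m := by
      simp only [mem_Iio, Nat.lt_succ_iff]
      exact biInf_le_eq_of_antitone hN m
    exact hIio ▸ apply_mem_chainCover m

lemma Antitone.UofCover_chainCover_mem (hN : Antitone N) (x : X) :
    UofCover (chainCover N) x ∈ chainCover N :=
  UofCover_chainCover x ▸ hN.biInter_mem_chainCover fun _ _ hji hx => hN hji hx

lemma Antitone.sUnion_mem_chainCover (hN : Antitone N) {S : Set (Set X)}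
    (hS : S ⊆ chainCover N) (hne : S.Nonempty) : ⋃₀ S ∈ chainCover N := by
  classical
  by_cases huniv : univ ∈ S
  · exact eq_univ_of_univ_subset (subset_sUnion_of_mem huniv) ▸ univ_mem_chainCover
  by_cases hk : ∃ k, N k ∈ S
  · suffices ⋃₀ S = N (Nat.find hk) from this ▸ apply_mem_chainCover _
    refine (sUnion_subset fun M hM => ?_).antisymm (subset_sUnion_of_mem (Nat.find_spec hk))
    rcases hS hM with rfl | rfl | ⟨j, rfl⟩
    · exact absurd hM huniv
    · exact iInter_subset N _
    · exact hN (Nat.find_min' hk hM)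
  · push Not at hk
    have hS_eq : S = {⋂ i, N i} := by
      refine hne.subset_singleton_iff.1 fun M hM => ?_
      rcases hS hM with rfl | rfl | ⟨j, rfl⟩
      · exact absurd hM huniv
      · rfl
      · exact absurd hM (hk j)
    exact hS_eq ▸ (sUnion_singleton _).symm ▸ iInter_mem_chainCover

lemma Antitone.biUnion_UofCover_mem_chainCover (hN : Antitone N) {A : Set X}
    (hA : A.Nonempty) : ⋃ a ∈ A, UofCover (chainCover N) a ∈ chainCover N := by
  rw [← sUnion_image]
  exact hN.sUnion_mem_chainCover (image_subset_iff.2 fun a _ => hN.UofCover_chainCover_mem a)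
    (hA.image _)

end

/-- For a strictly decreasing chain `(N i)` in an l-base `B` with `⋂ i, N i ∈ B`, and
`α = {X, ⋂ i, N i} ∪ {N i : i ∈ ℕ}`, the set `U_α(A)` is a finite union of members of
`α`, hence belongs to `B`, for every `A ⊆ X`. -/
theorem UofCover_antichain_mem_lbase {X : Type*} [TopologicalSpace X]
    (B : Set (Set X)) (hB : IsLBase B) (N : ℕ → Set X) (hNB : ∀ i, N i ∈ B)
    (hmono : ∀ i, N (i + 1) ⊂ N i) (hI : (⋂ i, N i) ∈ B) :
    ∀ A : Set X,
      (∃ β : Set (Set X), β.Finite ∧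
          β ⊆ insert Set.univ (insert (⋂ i, N i) (Set.range N)) ∧
          (⋃ a ∈ A, UofCover (insert Set.univ (insert (⋂ i, N i) (Set.range N))) a)
            = ⋃₀ β) ∧
      (⋃ a ∈ A, UofCover (insert Set.univ (insert (⋂ i, N i) (Set.range N))) a) ∈ B := by
  intro A
  change (∃ β, β.Finite ∧ β ⊆ chainCover N ∧ ⋃ a ∈ A, UofCover (chainCover N) a = ⋃₀ β) ∧
    ⋃ a ∈ A, UofCover (chainCover N) a ∈ B
  obtain ⟨-, -, -, hempty, huniv⟩ := hB
  rcases A.eq_empty_or_nonempty with rfl | hA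
  · exact ⟨⟨∅, finite_empty, empty_subset _, by simp⟩, by simpa using hempty⟩
  have hU := (antitone_nat_of_succ_le fun n => (hmono n).1).biUnion_UofCover_mem_chainCover hA
  exact ⟨⟨_, finite_singleton _, singleton_subset_iff.2 hU, (sUnion_singleton _).symm⟩,
    chainCover_subset huniv hNB hI hU⟩
end

section
/- Let X be a topological space, U a transitive neighbornet of X (U transitive, U(x) an open neighborhood of x for each x) such that the family {U(x) : x ∈ X} is infinite, and suppose that for every sequence (x_i) in X there exists n with U(x_n) ⊆ ⋃_{i<n} U(x_i). Then there exists a sequence (y_i) in X such that U(y_{i+1}) ⊊ U(y_i) for all i. -/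
lemma keyStep {X : Type*} (U : X → Set X) (hrefl : ∀ x, x ∈ U x)
    (htrans : ∀ x y, y ∈ U x → U y ⊆ U x)
    (hyp : ∀ x : ℕ → X, ∃ n : ℕ, U (x n) ⊆ ⋃ i < n, U (x i))
    (W : Set X) (hW : (U '' W).Infinite) :
    ∃ z ∈ W, (U '' {w ∈ W | U w ⊂ U z}).Infinite := by
  classical
  have hne : Nonempty X := by
    obtain ⟨v, w, hw, _⟩ := hW.nonempty
    exact ⟨w⟩
  -- finite cover claim
  have hcov : ∃ F : Finset X, ↑F ⊆ W ∧ ∀ w ∈ W, U w ⊆ ⋃ z ∈ F, U z := by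
    by_contra h
    push_neg at h
    -- h : ∀ F, ↑F ⊆ W → ∃ w ∈ W, ¬ U w ⊆ ⋃ z ∈ F, U z
    have g : ∀ F : Finset X, ∃ w : X, ↑F ⊆ W → (w ∈ W ∧ ¬ U w ⊆ ⋃ z ∈ F, U z) := by
      intro F
      by_cases hF : (↑F : Set X) ⊆ W
      · obtain ⟨w, hw1, hw2⟩ := h F hF
        exact ⟨w, fun _ => ⟨hw1, hw2⟩⟩
      · exact ⟨Classical.arbitrary X, fun hc => absurd hc hF⟩
    choose pick hpick using g
    obtain ⟨F, hF0, hFs⟩ : ∃ F : ℕ → Finset X, F 0 = ∅ ∧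
        ∀ n, F (n+1) = insert (pick (F n)) (F n) :=
      ⟨fun n => Nat.rec ∅ (fun _ Fn => insert (pick Fn) Fn) n, rfl, fun n => rfl⟩
    have hFW : ∀ n, (↑(F n) : Set X) ⊆ W := by
      intro n
      induction n with
      | zero => simp [hF0]
      | succ n ih =>
        intro a ha
        rw [hFs] at ha
        simp only [Finset.coe_insert, Set.mem_insert_iff] at ha
        rcases ha with rfl | ha
        · exact (hpick (F n) ih).1
        · exact ih ha
    have hmono : ∀ m n, m ≤ n → F m ⊆ F n := by
      intro m n hmn
      induction n with
      | zero => simp_all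
      | succ n ih =>
        rcases Nat.lt_or_ge m (n+1) with h1 | h1
        · refine (ih (Nat.lt_succ_iff.mp h1)).trans ?_
          rw [hFs]; exact Finset.subset_insert _ _
        · have : m = n + 1 := le_antisymm hmn h1
          subst this; exact Finset.Subset.refl _
    set x : ℕ → X := fun n => pick (F n) with hx
    obtain ⟨n, hn⟩ := hyp x
    have hsub : (⋃ i < n, U (x i)) ⊆ ⋃ z ∈ F n, U z := by
      intro a ha
      simp only [Set.mem_iUnion] at ha ⊢
      obtain ⟨i, hi, hai⟩ := ha
      refine ⟨x i, ?_, hai⟩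
      have : x i ∈ F (i+1) := by rw [hFs]; exact Finset.mem_insert_self _ _
      exact hmono (i+1) n hi this
    exact (hpick (F n) (hFW n)).2 (hn.trans hsub)
  obtain ⟨F, hFW, hF⟩ := hcov
  -- pigeonhole: some z ∈ F has infinitely many values below it
  have hsub : U '' W ⊆ ⋃ z ∈ F, U '' {w ∈ W | U w ⊆ U z} := by
    rintro _ ⟨w, hw, rfl⟩
    have : w ∈ ⋃ z ∈ F, U z := hF w hw (hrefl w)
    simp only [Set.mem_iUnion] at this ⊢
    obtain ⟨z, hz, hwz⟩ := this
    exact ⟨z, hz, w, ⟨hw, htrans z w hwz⟩, rfl⟩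
  have : ∃ z ∈ F, (U '' {w ∈ W | U w ⊆ U z}).Infinite := by
    by_contra hc
    push_neg at hc
    exact hW (Set.Finite.subset (Set.Finite.biUnion F.finite_toSet hc) hsub)
  obtain ⟨z, hz, hzinf⟩ := this
  refine ⟨z, hFW hz, ?_⟩
  have h2 : (U '' {w ∈ W | U w ⊆ U z}) \ {U z} ⊆ U '' {w ∈ W | U w ⊂ U z} := by
    rintro _ ⟨⟨w, ⟨hw, hwz⟩, rfl⟩, hne⟩
    exact ⟨w, ⟨hw, lt_of_le_of_ne hwz (by simpa using hne)⟩, rfl⟩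
  exact ((hzinf.diff (Set.finite_singleton _)).mono h2)

/-- Let `U` be a transitive neighbornet with infinitely many distinct values `U x`, and
suppose every sequence `(x i)` has some `n` with `U (x n) ⊆ ⋃_{i<n} U (x i)`. Then there
is a sequence `(y i)` with `U (y (i+1)) ⊊ U (y i)` for all `i`. -/
theorem exists_strictly_decreasing_values {X : Type*} [TopologicalSpace X]
    (U : X → Set X) (hopen : ∀ x, IsOpen (U x)) (hrefl : ∀ x, x ∈ U x)
    (htrans : ∀ x y, y ∈ U x → U y ⊆ U x)
    (hinf : (Set.range U).Infinite)
    (hyp : ∀ x : ℕ → X, ∃ n : ℕ, U (x n) ⊆ ⋃ i < n, U (x i)) :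
    ∃ y : ℕ → X, ∀ i : ℕ, U (y (i + 1)) ⊂ U (y i) := by
  set P : X → Prop := fun x => (U '' {w | U w ⊂ U x}).Infinite with hP
  have step : ∀ x, P x → ∃ y, (U y ⊂ U x) ∧ P y := by
    intro x hx
    obtain ⟨z, hzW, hzinf⟩ := keyStep U hrefl htrans hyp {w | U w ⊂ U x} hx
    refine ⟨z, hzW, hzinf.mono ?_⟩
    exact Set.image_mono (fun w hw => hw.2)
  have init : ∃ x, P x := by
    have : Set.range U = U '' Set.univ := (Set.image_univ).symm
    obtain ⟨z, _, hzinf⟩ := keyStep U hrefl htrans hyp Set.univ (by rwa [← this])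
    exact ⟨z, hzinf.mono (Set.image_mono (fun w hw => hw.2))⟩
  obtain ⟨x0, hx0⟩ := init
  choose f hf1 hf2 using step
  let y : ℕ → {x : X // P x} := fun n =>
    Nat.rec ⟨x0, hx0⟩ (fun _ p => ⟨f p.1 p.2, hf2 p.1 p.2⟩) n
  refine ⟨fun n => (y n).1, fun i => ?_⟩
  exact hf1 (y i).1 (y i).2
end

section
/- Let U, P, V be relations on a set X with P ∩ V ⊆ U, and suppose the family {P(x) : x ∈ X} has cardinality k ∈ ℕ. Let (N_i)_{i∈ℕ} be strictly increasing sets, and suppose there are indices i₁ < i₂ < ⋯ < i_{k+1} and points x_{i_m} ∈ N_{i_m} \ N_{i_m - 1} such that for each m, V(x_{i_m}) = N_q for a common q > i_{k+1} and U(x_{i_m}) = N_{i_m}. Then two of the sets P(x_{i_m}) coincide, yielding a contradiction; hence at most k such indices can exist. -/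
/-! For `a < b` the point `x b` lies in `V (x a) = N q` but, being new at level `i b`, not in
`U (x a) = N (i a)`; so `x b ∉ P (x a)`, while `x b ∈ P (x b)`. Hence `m ↦ P (x m)` is injective,
and the `k + 1` indices give `k + 1` distinct members of the `k`-element family `range P`. -/

open Function Set

section

variable {X : Type*}

theorem notMem_of_mem_diff_pred {N : ℕ → Set X} (hN : Monotone N) {a b : ℕ} (hab : a < b)
    {y : X} (hy : y ∈ N b \ N (b - 1)) : y ∉ N a :=
  fun h => hy.2 (hN (Nat.le_sub_one_of_lt hab) h)

theorem injective_comp_of_mem_diff_pred {ι : Type*} [LinearOrder ι] {U P V : X → Set X}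
    (hPV : ∀ x, P x ∩ V x ⊆ U x) (hPrefl : ∀ x, x ∈ P x)
    {N : ℕ → Set X} (hN : Monotone N) {i : ι → ℕ} (hi : StrictMono i)
    {q : ℕ} (hiq : ∀ m, i m ≤ q) {x : ι → X} (hx : ∀ m, x m ∈ N (i m) \ N (i m - 1))
    (hV : ∀ m, V (x m) = N q) (hU : ∀ m, U (x m) = N (i m)) :
    Injective (P ∘ x) := by
  refine Injective.of_lt_imp_ne fun a b hab heq => ?_
  have hP : x b ∈ P (x a) := (congrFun heq (x b)).mpr (hPrefl (x b))
  have hV : x b ∈ V (x a) := hV a ▸ hN (hiq b) (hx b).1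
  have hU : x b ∉ U (x a) := hU a ▸ notMem_of_mem_diff_pred hN (hi hab) (hx b)
  exact hU (hPV _ ⟨hP, hV⟩)

theorem card_le_ncard_range_of_injective_comp {ι Y : Type*} {P : X → Set Y}
    (hP : (range P).Finite) {x : ι → X} (hinj : Injective (P ∘ x)) :
    Nat.card ι ≤ (range P).ncard := by
  rw [← ncard_range_of_injective hinj]
  exact ncard_le_ncard (range_comp_subset_range x P) hP

end

/-- The injectivity/pigeonhole step: if `P ∩ V ⊆ U` pointwise, the family
`{P x : x ∈ X}` has exactly `k` members, `(N i)` is strictly increasing, and there are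
`k + 1` indices `i 0 < ⋯ < i k` with points `x m ∈ N (i m) \ N (i m - 1)` such that
`V (x m) = N q` (for a common `q` beyond the last index) and `U (x m) = N (i m)`, then
we reach a contradiction: hence at most `k` such indices can exist. -/
theorem pigeonhole_contradiction {X : Type*} (U P V : X → Set X)
    (hPV : ∀ x, P x ∩ V x ⊆ U x) (hPrefl : ∀ x, x ∈ P x)
    (k : ℕ) (hPfin : (Set.range P).Finite) (hPcard : (Set.range P).ncard = k)
    (N : ℕ → Set X) (hmono : ∀ n, N n ⊂ N (n + 1))
    (i : Fin (k + 1) → ℕ) (hi : StrictMono i)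
    (q : ℕ) (hq : i (Fin.last k) < q)
    (x : Fin (k + 1) → X) (hx : ∀ m, x m ∈ N (i m) \ N (i m - 1))
    (hV : ∀ m, V (x m) = N q) (hU : ∀ m, U (x m) = N (i m)) :
    False := by
  have hN : Monotone N := monotone_nat_of_le_succ fun n => (hmono n).subset
  have hiq : ∀ m, i m ≤ q := fun m => (hi.monotone (Fin.le_last m)).trans hq.le
  have hinj := injective_comp_of_mem_diff_pred hPV hPrefl hN hi hiq hx hV hU
  have hcard := card_le_ncard_range_of_injective_comp hPfin hinj
  rw [Nat.card_fin, hPcard] at hcard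
  omega
end
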